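/- arXiv:0711.3045 — 3 statements merged into one kernel-verified Lean document; each statement's English description precedes it below -/
import Mathlib

section
/- Every E(R)-algebra is commutative. That is, if A is an R-algebra over a commutative ring R such that the canonical map δ: A → End_R(A), sending a to right multiplication by a, is an isomorphism of R-algebras, then A is commutative. -/
/-- Every E(R)-algebra is commutative: if the canonical map `a ↦ (x ↦ x * a)` from `A` to
`End_R(A)` is an isomorphism (in particular bijective), then `A` is commutative. -/
theorem stmt0 (R A : Type) [CommRing R] [Ring A] [Algebra R A]
    (h : Function.Bijective fun a : A => LinearMap.mulRight R a) :
    ∀ a b : A, a * b = b * a := by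
  intro a b
  obtain ⟨c, hc⟩ := h.2 (LinearMap.mulLeft R a)
  have h1 := congrArg (fun f : Module.End R A => f 1) hc
  simp at h1
  have hb := congrArg (fun f : Module.End R A => f b) hc
  simp [h1] at hb
  exact hb.symm
end

section
/- If R is an S-ring (with S = {p^n : n ∈ ω} for a fixed p ∈ R) whose additive group is a direct sum of S-invariant subgroups each of cardinality less than 2^{ℵ₀}, then R is ΣS-incomplete: for every sequence of nonzero elements m_n ∈ R (n ∈ ω) there exist a_n ∈ {0,1} such that the sum Σ_{n∈ω} p^n a_n m_n (computed in the p-adic completion) does not lie in R. -/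
open DirectSum Cardinal

/-- Auxiliary recursive sequence of "sparse" indices. -/
def nuSeq (J : ℕ → ℕ) : ℕ → ℕ
  | 0 => 0
  | t + 1 => nuSeq J t + J (nuSeq J t) + 1

/-- If an S-ring `R` (with `S = ⟨p⟩`) is, as a `ℤ`-module, an internal direct sum of
`S`-invariant subgroups each of cardinality `< 2^ℵ₀`, then `R` is `ΣS`-incomplete: for every
sequence of nonzero `m n ∈ R` there are coefficients `a n ∈ {0,1}` such that the sum
`Σ pⁿ aₙ mₙ` (formed in the `p`-adic completion) does not lie in `R`, i.e. no element of `R`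
is congruent to all the partial sums `Σ_{n<k} pⁿ aₙ mₙ` modulo `pᵏR`. -/
theorem stmt1 (R : Type) [CommRing R] (p : R)
    (hp : ∀ x : R, p * x = 0 → x = 0)
    (hred : ∀ x : R, (∀ n : ℕ, x ∈ Ideal.span {p} ^ n) → x = 0)
    (ι : Type) [DecidableEq ι] (A : ι → Submodule ℤ R)
    (hcard : ∀ i, Cardinal.mk (A i) < Cardinal.continuum)
    (hinv : ∀ i, ∀ x ∈ A i, p * x ∈ A i)
    (hdirect : DirectSum.IsInternal A) :
    ∀ m : ℕ → R, (∀ n, m n ≠ 0) →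
      ∃ a : ℕ → R, (∀ n, a n = 0 ∨ a n = 1) ∧
        ∀ r : R, ∃ k : ℕ,
          r - (∑ n ∈ Finset.range k, p ^ n * a n * m n) ∉ Ideal.span {p} ^ k := by
  classical
  intro m hm
  by_contra hcon
  push_neg at hcon
  -- membership in the power ideal is divisibility
  have hmem : ∀ (x : R) (k : ℕ), x ∈ Ideal.span {p} ^ k ↔ p ^ k ∣ x := by
    intro x k; rw [Ideal.span_singleton_pow, Ideal.mem_span_singleton]
  simp only [hmem] at hcon
  -- cancellation by powers of p
  have hcancel : ∀ (k : ℕ) (x y : R), p ^ k * x = p ^ k * y → x = y := by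
    intro k
    induction k with
    | zero => intro x y h; simpa using h
    | succ k ih =>
      intro x y h
      apply ih
      have h2 : p * (p ^ k * x - p ^ k * y) = 0 := by
        have h' : p ^ (k + 1) * x = p * (p ^ k * x) := by ring
        have h'' : p ^ (k + 1) * y = p * (p ^ k * y) := by ring
        rw [mul_sub, ← h', ← h'', h, sub_self]
      exact sub_eq_zero.mp (hp _ h2)
  have hcancel' : ∀ (a b : ℕ) (x : R), p ^ (a + b) ∣ p ^ a * x → p ^ b ∣ x := by
    intro a b x ⟨c, hc⟩
    refine ⟨c, hcancel a _ _ ?_⟩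
    rw [hc]; ring
  have hnd : ∀ x : R, (∀ k : ℕ, p ^ k ∣ x) → x = 0 := by
    intro x h
    exact hred x fun k => (hmem x k).2 (h k)
  -- choose witnesses of non-divisibility
  have hJ0 : ∀ n, ∃ k, ¬ p ^ k ∣ m n := by
    intro n
    by_contra h
    push_neg at h
    exact hm n (hnd _ h)
  choose J hJ using hJ0
  set ν : ℕ → ℕ := nuSeq J with hν
  have hνmono : StrictMono ν := by
    apply strictMono_nat_of_lt_succ
    intro t
    show ν t < ν t + J (ν t) + 1
    omega
  have hνkey : ∀ t, ¬ p ^ (ν (t + 1)) ∣ p ^ (ν t) * m (ν t) := by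
    intro t hdvd
    have h1 : ν (t + 1) = ν t + (J (ν t) + 1) := by
      show ν t + J (ν t) + 1 = _
      omega
    rw [h1] at hdvd
    have := hcancel' (ν t) (J (ν t) + 1) (m (ν t)) hdvd
    exact hJ _ (dvd_trans (pow_dvd_pow p (Nat.le_succ _)) this)
  -- the 0-1 sequences and the limits
  set aa : Set ℕ → ℕ → R := fun X n => if ∃ t, ν t = n ∧ t ∈ X then 1 else 0 with haadef
  have haa : ∀ X n, aa X n = 0 ∨ aa X n = 1 := by
    intro X n
    by_cases h : ∃ t, ν t = n ∧ t ∈ X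
    · right; simp [haadef, h]
    · left; simp [haadef, h]
  have haa1 : ∀ (X : Set ℕ) t, t ∈ X → aa X (ν t) = 1 := by
    intro X t ht; simp only [haadef]; rw [if_pos ⟨t, rfl, ht⟩]
  have haa0 : ∀ (X : Set ℕ) t, t ∉ X → aa X (ν t) = 0 := by
    intro X t ht; simp only [haadef]
    rw [if_neg]
    rintro ⟨s, hs, hsX⟩
    exact ht ((hνmono.injective hs) ▸ hsX)
  have hex : ∀ X : Set ℕ, ∃ r : R, ∀ k, p ^ k ∣ r - ∑ n ∈ Finset.range k, p ^ n * aa X n * m n :=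
    fun X => hcon (aa X) (haa X)
  choose σ hσ using hex
  -- injectivity of σ
  have hσinj : Function.Injective σ := by
    intro X Y hXY
    by_contra hne
    have hdiff : ∃ t, ¬(t ∈ X ↔ t ∈ Y) := by
      by_contra h
      push_neg at h
      exact hne (Set.ext fun t => h t)
    set t₀ := Nat.find hdiff with ht₀def
    have ht₀ : ¬(t₀ ∈ X ↔ t₀ ∈ Y) := Nat.find_spec hdiff
    have htmin : ∀ s, s < t₀ → (s ∈ X ↔ s ∈ Y) := fun s hs => not_not.mp (Nat.find_min hdiff hs)
    set k := ν (t₀ + 1) with hkdef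
    have h3 : p ^ k ∣ (∑ n ∈ Finset.range k, p ^ n * aa X n * m n)
        - ∑ n ∈ Finset.range k, p ^ n * aa Y n * m n := by
      have hd := dvd_sub (hσ X k) (hσ Y k)
      rw [hXY] at hd
      have heq : σ Y - (∑ n ∈ Finset.range k, p ^ n * aa X n * m n)
          - (σ Y - ∑ n ∈ Finset.range k, p ^ n * aa Y n * m n)
          = (∑ n ∈ Finset.range k, p ^ n * aa Y n * m n)
            - ∑ n ∈ Finset.range k, p ^ n * aa X n * m n := by ring
      rw [heq] at hd
      simpa using hd.neg_right
    have hsum : (∑ n ∈ Finset.range k, p ^ n * aa X n * m n)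
        - ∑ n ∈ Finset.range k, p ^ n * aa Y n * m n
        = p ^ (ν t₀) * (aa X (ν t₀) - aa Y (ν t₀)) * m (ν t₀) := by
      rw [← Finset.sum_sub_distrib]
      rw [Finset.sum_eq_single (ν t₀)]
      · ring
      · intro n hn hne'
        suffices h : aa X n = aa Y n by rw [h]; ring
        have hagree : (∃ t, ν t = n ∧ t ∈ X) ↔ (∃ t, ν t = n ∧ t ∈ Y) := by
          constructor
          · rintro ⟨t, rfl, htX⟩
            have hlt : t < t₀ + 1 := hνmono.lt_iff_lt.mp (Finset.mem_range.mp hn)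
            have : t ≠ t₀ := fun h => hne' (by rw [h])
            exact ⟨t, rfl, (htmin t (by omega)).mp htX⟩
          · rintro ⟨t, rfl, htY⟩
            have hlt : t < t₀ + 1 := hνmono.lt_iff_lt.mp (Finset.mem_range.mp hn)
            have : t ≠ t₀ := fun h => hne' (by rw [h])
            exact ⟨t, rfl, (htmin t (by omega)).mpr htY⟩
        simp only [haadef]
        by_cases hc : ∃ t, ν t = n ∧ t ∈ X
        · rw [if_pos hc, if_pos (hagree.mp hc)]
        · rw [if_neg hc, if_neg (fun h => hc (hagree.mpr h))]
      · intro h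
        exact absurd (Finset.mem_range.mpr (hνmono (Nat.lt_succ_self t₀))) h
    rw [hsum] at h3
    by_cases hX0 : t₀ ∈ X
    · have hY0 : t₀ ∉ Y := fun h => ht₀ ⟨fun _ => h, fun _ => hX0⟩
      rw [haa1 X t₀ hX0, haa0 Y t₀ hY0] at h3
      simp only [sub_zero, mul_one] at h3
      exact hνkey t₀ (by simpa using h3)
    · have hY0 : t₀ ∈ Y := by
        by_contra h
        exact ht₀ ⟨fun hx => absurd hx hX0, fun hy => absurd hy h⟩
      rw [haa0 X t₀ hX0, haa1 Y t₀ hY0] at h3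
      have : p ^ k ∣ p ^ (ν t₀) * m (ν t₀) := by
        have h4 : p ^ ν t₀ * (0 - 1) * m (ν t₀) = -(p ^ ν t₀ * m (ν t₀)) := by ring
        rw [h4] at h3
        exact (dvd_neg).mp h3
      exact hνkey t₀ this
  -- the direct-sum decomposition map
  have hinj : Function.Injective (DirectSum.coeAddMonoidHom A) := hdirect.injective
  set E := AddEquiv.ofBijective (DirectSum.coeAddMonoidHom A) hdirect with hEdef
  set D : R → ⨁ i, A i := fun x => E.symm x with hDdef
  have hDcoe : ∀ x, DirectSum.coeAddMonoidHom A (D x) = x := fun x => E.apply_symm_apply x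
  have hDinj : Function.Injective D := fun x y h => by
    have := congrArg (DirectSum.coeAddMonoidHom A) h
    rwa [hDcoe, hDcoe] at this
  set pmul : ∀ i, A i →+ A i := fun i =>
    AddMonoidHom.mk' (fun a => ⟨p * a, hinv i a a.2⟩)
      (fun a b => by ext; push_cast; ring) with hpmuldef
  set Phat : (⨁ i, A i) →+ ⨁ i, A i := DFinsupp.mapRange.addMonoidHom pmul with hPhatdef
  have hPhat_apply : ∀ (v : ⨁ i, A i) i, (Phat v) i = pmul i (v i) := fun v i => rfl
  have hPhat_coe : ∀ v : ⨁ i, A i,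
      DirectSum.coeAddMonoidHom A (Phat v) = p * DirectSum.coeAddMonoidHom A v := by
    intro v
    induction v using DirectSum.induction_on with
    | zero => simp
    | of i x =>
      have h1 : Phat (DirectSum.of _ i x) = DirectSum.of _ i (pmul i x) :=
        DFinsupp.mapRange_single (hf := fun i => (pmul i).map_zero)
      rw [h1, DirectSum.coeAddMonoidHom_of, DirectSum.coeAddMonoidHom_of]
      rfl
    | add x y hx hy => rw [map_add, map_add, hx, hy, map_add]; ring
  have hDp : ∀ x, D (p * x) = Phat (D x) := by
    intro x
    apply hinj
    rw [hDcoe, hPhat_coe, hDcoe]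
  have hDdvd : ∀ (k : ℕ) (x : R), p ^ k ∣ x → ∀ i, p ^ k ∣ ((D x i : R)) := by
    intro k
    induction k with
    | zero => intro x _ i; simp
    | succ k ih =>
      rintro x ⟨c, rfl⟩ i
      have h1 : p ^ (k + 1) * c = p * (p ^ k * c) := by ring
      rw [h1, hDp, hPhat_apply]
      have h2 : ((pmul i (D (p ^ k * c) i) : A i) : R) = p * ((D (p ^ k * c) i : R)) := rfl
      rw [h2]
      obtain ⟨d, hd⟩ := ih (p ^ k * c) ⟨c, rfl⟩ i
      exact ⟨d, by rw [hd]; ring⟩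
  -- the countable set of relevant coordinates
  set Istar : Set ι := ⋃ t, ((DFinsupp.support (D (p ^ (ν t) * m (ν t))) : Finset ι) : Set ι)
    with hIstardef
  have hIcount : Istar.Countable := Set.countable_iUnion fun t => (Finset.countable_toSet _)
  have hzero : ∀ (X : Set ℕ) (i : ι), i ∉ Istar → D (σ X) i = 0 := by
    intro X i hi
    have hdvdall : ∀ k : ℕ, p ^ k ∣ ((D (σ X) i : R)) := by
      intro k
      have h1 := hσ X k
      have h2 : D (∑ n ∈ Finset.range k, p ^ n * aa X n * m n) i = 0 := by
        have hDsum : D (∑ n ∈ Finset.range k, p ^ n * aa X n * m n)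
            = ∑ n ∈ Finset.range k, D (p ^ n * aa X n * m n) := by
          have : D (∑ n ∈ Finset.range k, p ^ n * aa X n * m n)
              = E.symm (∑ n ∈ Finset.range k, p ^ n * aa X n * m n) := rfl
          rw [this, map_sum]
        rw [hDsum, DFinsupp.finset_sum_apply]
        apply Finset.sum_eq_zero
        intro n _
        by_cases hc : ∃ t, ν t = n ∧ t ∈ X
        · obtain ⟨t, rfl, htX⟩ := hc
          rw [haa1 X t htX, mul_one]
          have hns : i ∉ DFinsupp.support (D (p ^ ν t * m (ν t))) := fun h =>
            hi (Set.mem_iUnion.mpr ⟨t, h⟩)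
          exact DFinsupp.notMem_support_iff.mp hns
        · have h0 : aa X n = 0 := by simp only [haadef]; rw [if_neg hc]
          rw [h0, mul_zero, zero_mul]
          have : D (0 : R) = 0 := by
            apply hinj; rw [hDcoe, map_zero]
          rw [this]; rfl
      have h3 : D (σ X) i = D (σ X - ∑ n ∈ Finset.range k, p ^ n * aa X n * m n) i := by
        have hsub : D (σ X - ∑ n ∈ Finset.range k, p ^ n * aa X n * m n)
            = D (σ X) - D (∑ n ∈ Finset.range k, p ^ n * aa X n * m n) := by
          show E.symm _ = E.symm _ - E.symm _
          rw [map_sub]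
        rw [hsub, DFinsupp.sub_apply, h2, sub_zero]
      rw [h3]
      exact hDdvd k _ h1 i
    exact Subtype.ext (hnd _ hdvdall)
  have hsupp : ∀ (X : Set ℕ) (i : ι), i ∈ DFinsupp.support (D (σ X)) → i ∈ Istar := by
    intro X i h
    by_contra hi
    exact (DFinsupp.mem_support_iff.mp h) (hzero X i hi)
  -- the encoding into finsets over a small type
  set T := (Σ i : ↥Istar, A (↑i : ι)) with hTdef
  set F : Set ℕ → Finset T := fun X =>
    (DFinsupp.support (D (σ X))).attach.image
      (fun i => ⟨⟨i.1, hsupp X i.1 i.2⟩, D (σ X) i.1⟩) with hFdef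
  have hFinj : Function.Injective F := by
    intro X Y h
    apply hσinj
    apply hDinj
    apply DFinsupp.ext
    intro i
    by_cases hiX : i ∈ DFinsupp.support (D (σ X))
    · have hmemX : (⟨⟨i, hsupp X i hiX⟩, D (σ X) i⟩ : T) ∈ F X :=
        Finset.mem_image.mpr ⟨⟨i, hiX⟩, Finset.mem_attach _ _, rfl⟩
      rw [h] at hmemX
      obtain ⟨j, -, hj⟩ := Finset.mem_image.mp hmemX
      obtain ⟨j, hjY⟩ := j
      have h1 : j = i := congrArg (fun s : T => (s.1 : ι)) hj
      subst h1
      exact (eq_of_heq (Sigma.ext_iff.mp hj).2).symm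
    · by_cases hiY : i ∈ DFinsupp.support (D (σ Y))
      · have hmemY : (⟨⟨i, hsupp Y i hiY⟩, D (σ Y) i⟩ : T) ∈ F Y :=
          Finset.mem_image.mpr ⟨⟨i, hiY⟩, Finset.mem_attach _ _, rfl⟩
        rw [← h] at hmemY
        obtain ⟨j, -, hj⟩ := Finset.mem_image.mp hmemY
        obtain ⟨j, hjX⟩ := j
        have h1 : j = i := congrArg (fun s : T => (s.1 : ι)) hj
        subst h1
        exact absurd hjX hiX
      · rw [DFinsupp.notMem_support_iff.mp hiX, DFinsupp.notMem_support_iff.mp hiY]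
  -- cardinality contradiction
  have hcard1 : Cardinal.continuum ≤ Cardinal.mk (Finset T) := by
    have h1 : Cardinal.mk (Set ℕ) = Cardinal.continuum := by
      rw [Cardinal.mk_set, Cardinal.mk_nat, Cardinal.two_power_aleph0]
    calc Cardinal.continuum = Cardinal.mk (Set ℕ) := h1.symm
      _ ≤ Cardinal.mk (Finset T) := Cardinal.mk_le_of_injective hFinj
  have hTlt : Cardinal.mk T < Cardinal.continuum := by
    haveI : Countable ↥Istar := hIcount.to_subtype
    rw [hTdef, Cardinal.mk_sigma]
    calc Cardinal.sum (fun i : ↥Istar => Cardinal.mk (A (↑i : ι)))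
        < Cardinal.prod (fun _ : ↥Istar => Cardinal.continuum) :=
          Cardinal.sum_lt_prod _ _ fun i => hcard _
      _ = Cardinal.continuum ^ Cardinal.mk ↥Istar := Cardinal.prod_const' _ _
      _ ≤ Cardinal.continuum ^ Cardinal.aleph0 :=
          Cardinal.power_le_power_left Cardinal.continuum_ne_zero Cardinal.mk_le_aleph0
      _ = Cardinal.continuum := Cardinal.continuum_power_aleph0
  have hFT : Cardinal.mk (Finset T) < Cardinal.continuum := by
    rcases finite_or_infinite T with hT | hT
    · haveI := hT
      haveI := Fintype.ofFinite T
      exact lt_trans (Cardinal.lt_aleph0_of_finite _) Cardinal.aleph0_lt_continuum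
    · rw [Cardinal.mk_finset_of_infinite]
      exact hTlt
  exact absurd hcard1 (not_le.mpr hFT)
end

section
/- If R is an S-ring of cardinality less than 2^{ℵ₀}, then R is ΣS-incomplete: for every sequence of nonzero elements m_n ∈ R there exist coefficients a_n ∈ {0,1} such that Σ_{n∈ω} p^n a_n m_n, formed in the p-adic completion of R, is not an element of R. -/
/-- If an S-ring `R` (with `S = ⟨p⟩`) has cardinality `< 2^ℵ₀`, then `R` is `ΣS`-incomplete:
for every sequence of nonzero `m n ∈ R` there are coefficients `a n ∈ {0,1}` such that
`Σ pⁿ aₙ mₙ`, formed in the `p`-adic completion, is not an element of `R`, i.e. no element of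
`R` is congruent to all partial sums `Σ_{n<k} pⁿ aₙ mₙ` modulo `pᵏR`. -/
theorem stmt2 (R : Type) [CommRing R] (p : R)
    (hp : ∀ x : R, p * x = 0 → x = 0)
    (hred : ∀ x : R, (∀ n : ℕ, x ∈ Ideal.span {p} ^ n) → x = 0)
    (hcard : Cardinal.mk R < Cardinal.continuum) :
    ∀ m : ℕ → R, (∀ n, m n ≠ 0) →
      ∃ a : ℕ → R, (∀ n, a n = 0 ∨ a n = 1) ∧
        ∀ r : R, ∃ k : ℕ,
          r - (∑ n ∈ Finset.range k, p ^ n * a n * m n) ∉ Ideal.span {p} ^ k := by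
  classical
  intro m hm
  by_contra hcon
  push_neg at hcon
  set I : Ideal R := Ideal.span {p} with hI
  -- powers of p are regular
  have hreg : ∀ (n : ℕ) (x : R), p ^ n * x = 0 → x = 0 := by
    intro n
    induction n with
    | zero => intro x h; simpa using h
    | succ n ih =>
      intro x h
      apply hp
      apply ih
      rw [← mul_assoc, ← pow_succ]
      exact h
  have hne : ∀ n : ℕ, p ^ n * m n ≠ 0 := fun n h => hm n (hreg n _ h)
  -- escape exponents
  have hesc : ∀ n : ℕ, ∃ e : ℕ, p ^ n * m n ∉ I ^ e := by
    intro n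
    by_contra h
    push_neg at h
    exact hne n (hred _ h)
  choose e he using hesc
  -- the sparse increasing sequence of indices
  let k : ℕ → ℕ := fun j => Nat.rec 0 (fun _ ki => max (ki + 1) (e ki)) j
  have hksucc : ∀ j, k (j + 1) = max (k j + 1) (e (k j)) := fun j => rfl
  have hkmono : StrictMono k := by
    apply strictMono_nat_of_lt_succ
    intro j
    rw [hksucc]
    exact lt_of_lt_of_le (Nat.lt_succ_self _) (le_max_left _ _)
  have hkE : ∀ j, p ^ (k j) * m (k j) ∉ I ^ (k (j + 1)) := by
    intro j hmem
    apply he (k j)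
    have : I ^ (k (j + 1)) ≤ I ^ (e (k j)) :=
      Ideal.pow_le_pow_right (by rw [hksucc]; exact le_max_right _ _)
    exact this hmem
  -- for each set T, the coefficient sequence
  let a : Set ℕ → ℕ → R := fun T n => @ite R (∃ j, j ∈ T ∧ k j = n) (Classical.propDecidable _) 1 0
  have haval : ∀ (T : Set ℕ) (n : ℕ), (∃ j, j ∈ T ∧ k j = n) → a T n = 1 :=
    fun T n h => if_pos h
  have hav0 : ∀ (T : Set ℕ) (n : ℕ), ¬(∃ j, j ∈ T ∧ k j = n) → a T n = 0 :=
    fun T n h => if_neg h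
  have ha01 : ∀ T n, a T n = 0 ∨ a T n = 1 := by
    intro T n
    rcases Classical.em (∃ j, j ∈ T ∧ k j = n) with h | h
    · right; exact haval T n h
    · left; exact hav0 T n h
  -- choose realizers
  have hrex : ∀ T : Set ℕ, ∃ r : R,
      ∀ K : ℕ, r - (∑ n ∈ Finset.range K, p ^ n * a T n * m n) ∈ I ^ K :=
    fun T => hcon (a T) (ha01 T)
  choose r hr using hrex
  -- r is injective
  have hinj : Function.Injective r := by
    intro T T' hrTT'
    by_contra hTT'
    have hexj : ∃ j, ¬(j ∈ T ↔ j ∈ T') := by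
      by_contra h
      push_neg at h
      exact hTT' (Set.ext h)
    set j := Nat.find hexj with hj
    have hjspec : ¬(j ∈ T ↔ j ∈ T') := Nat.find_spec hexj
    have hjmin : ∀ i < j, (i ∈ T ↔ i ∈ T') := fun i hi => by
      by_contra h; exact Nat.find_min hexj hi h
    set K := k (j + 1) with hK
    -- the difference of partial sums lies in I ^ K
    have hdiff : (∑ n ∈ Finset.range K, p ^ n * a T n * m n)
        - (∑ n ∈ Finset.range K, p ^ n * a T' n * m n) ∈ I ^ K := by
      have h1 := hr T K
      have h2 := hr T' K
      rw [hrTT'] at h1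
      have := Submodule.sub_mem _ h2 h1
      simpa using this
    -- coefficients agree away from k j
    have hagree : ∀ n ∈ Finset.range K, n ≠ k j → a T n = a T' n := by
      intro n hn hnkj
      simp only [Finset.mem_range] at hn
      have hcond : (∃ i, i ∈ T ∧ k i = n) ↔ (∃ i, i ∈ T' ∧ k i = n) := by
        constructor
        · rintro ⟨i, hi, hki⟩
          have hilt : i < j + 1 := by
            rw [← hkmono.lt_iff_lt, hki]; exact hn
          have hij : i ≠ j := fun h => hnkj (by rw [← hki, h])
          have : i < j := lt_of_le_of_ne (Nat.lt_succ_iff.mp hilt) hij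
          exact ⟨i, (hjmin i this).mp hi, hki⟩
        · rintro ⟨i, hi, hki⟩
          have hilt : i < j + 1 := by
            rw [← hkmono.lt_iff_lt, hki]; exact hn
          have hij : i ≠ j := fun h => hnkj (by rw [← hki, h])
          have : i < j := lt_of_le_of_ne (Nat.lt_succ_iff.mp hilt) hij
          exact ⟨i, (hjmin i this).mpr hi, hki⟩
      rcases Classical.em (∃ i, i ∈ T ∧ k i = n) with h | h
      · rw [haval T n h, haval T' n (hcond.mp h)]
      · rw [hav0 T n h, hav0 T' n (fun h' => h (hcond.mpr h'))]
    -- the sum difference equals the single term at k j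
    have hkjK : k j ∈ Finset.range K := Finset.mem_range.mpr (hkmono (Nat.lt_succ_self j))
    have hsum : (∑ n ∈ Finset.range K, p ^ n * a T n * m n)
        - (∑ n ∈ Finset.range K, p ^ n * a T' n * m n)
        = p ^ (k j) * a T (k j) * m (k j) - p ^ (k j) * a T' (k j) * m (k j) := by
      rw [← Finset.sum_sub_distrib]
      apply Finset.sum_eq_single_of_mem _ hkjK
      intro n hn hnkj
      rw [hagree n hn hnkj]
      ring
    -- the condition ∃ i, i ∈ T ∧ k i = k j is equivalent to j ∈ T
    have hcondT : ∀ S : Set ℕ, (∃ i, i ∈ S ∧ k i = k j) ↔ j ∈ S := by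
      intro S
      constructor
      · rintro ⟨i, hi, hki⟩
        rwa [hkmono.injective hki] at hi
      · intro h; exact ⟨j, h, rfl⟩
    rw [hsum] at hdiff
    rcases Classical.em (j ∈ T) with hT | hT <;> rcases Classical.em (j ∈ T') with hT' | hT'
    · exact hjspec (iff_of_true hT hT')
    · rw [haval T _ ((hcondT T).mpr hT), hav0 T' _ (fun h' => hT' ((hcondT T').mp h'))] at hdiff
      apply hkE j
      simpa using hdiff
    · rw [hav0 T _ (fun h' => hT ((hcondT T).mp h')), haval T' _ ((hcondT T').mpr hT')] at hdiff
      apply hkE j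
      have := Submodule.neg_mem _ hdiff
      simpa using this
    · exact hjspec (iff_of_false hT hT')
  -- cardinality contradiction
  have hle : Cardinal.mk (Set ℕ) ≤ Cardinal.mk R := Cardinal.mk_le_of_injective hinj
  rw [Cardinal.mk_set, Cardinal.mk_nat, Cardinal.two_power_aleph0] at hle
  exact absurd (lt_of_le_of_lt hle hcard) (lt_irrefl _)
end
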